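/- arXiv:2310.14998 — 5 statements merged into one kernel-verified Lean document; each statement's English description precedes it below -/
import Mathlib

section
/- Let P = conv{±(1,1), ±(1,0), ±(0,1)} ⊂ ℝ² and u = (1,1). For any v, w ∈ P, with t = |ω(u,v)| and s = |ω(u,w)| (where ω is the standard area form on ℝ²), one has |ω(v,w)| ≤ t + s − ts. -/
open Set

/-!
The hexagon lies in the square `[-1, 1]²`, and the inequality already holds there. Replacing
`v` by `-v` or `w` by `-w` only changes signs, so we may assume `t = ω(u, v) ≥ 0` and
`s = ω(u, w) ≥ 0`. Then `t + s - ts ∓ ω(v, w)` equal `s (1 - v₂) + t (1 + w₁)` and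
`s (1 + v₁) + t (1 - w₂)`, which are nonnegative on the square.
-/

/-- The standard area (symplectic) form on ℝ². -/
noncomputable def omega2 (v w : ℝ × ℝ) : ℝ := v.1 * w.2 - v.2 * w.1

/-- The hexagon P = conv{±(1,1), ±(1,0), ±(0,1)}. -/
noncomputable def hexP : Set (ℝ × ℝ) :=
  convexHull ℝ {(1,1), (1,0), (0,1), (-1,-1), (-1,0), (0,-1)}

lemma omega2_neg_left (v w : ℝ × ℝ) : omega2 (-v) w = -omega2 v w := by
  simp only [omega2, Prod.fst_neg, Prod.snd_neg]; ring

lemma omega2_neg_right (v w : ℝ × ℝ) : omega2 v (-w) = -omega2 v w := by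
  simp only [omega2, Prod.fst_neg, Prod.snd_neg]; ring

lemma hexP_subset_Icc : hexP ⊆ Icc (-1) 1 := by
  refine convexHull_min ?_ (convex_Icc _ _)
  simp only [insert_subset_iff, singleton_subset_iff, mem_Icc, Prod.le_def]
  norm_num

lemma abs_omega2_le_of_omega2_nonneg {v w : ℝ × ℝ} (hv : v ∈ Icc (-1) 1)
    (hw : w ∈ Icc (-1) 1) (ht : 0 ≤ omega2 (1, 1) v) (hs : 0 ≤ omega2 (1, 1) w) :
    |omega2 v w| ≤ omega2 (1, 1) v + omega2 (1, 1) w - omega2 (1, 1) v * omega2 (1, 1) w := by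
  simp only [mem_Icc, Prod.le_def, Prod.fst_neg, Prod.snd_neg, Prod.fst_one, Prod.snd_one] at hv hw
  set t := omega2 (1, 1) v
  set s := omega2 (1, 1) w
  have hupper : t + s - t * s - omega2 v w = s * (1 - v.2) + t * (1 + w.1) := by
    simp only [t, s, omega2]; ring
  have hlower : t + s - t * s + omega2 v w = s * (1 + v.1) + t * (1 - w.2) := by
    simp only [t, s, omega2]; ring
  have h₁ := mul_nonneg hs (sub_nonneg.2 hv.2.2)
  have h₂ := mul_nonneg ht (neg_le_iff_add_nonneg'.1 hw.1.1)
  have h₃ := mul_nonneg hs (neg_le_iff_add_nonneg'.1 hv.1.1)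
  have h₄ := mul_nonneg ht (sub_nonneg.2 hw.2.2)
  exact abs_le.2 ⟨by linarith, by linarith⟩

lemma abs_omega2_le {v w : ℝ × ℝ} (hv : v ∈ Icc (-1) 1) (hw : w ∈ Icc (-1) 1) :
    |omega2 v w| ≤ |omega2 (1, 1) v| + |omega2 (1, 1) w| - |omega2 (1, 1) v| * |omega2 (1, 1) w| := by
  wlog ht : 0 ≤ omega2 (1, 1) v generalizing v
  · simpa only [omega2_neg_left, omega2_neg_right, abs_neg] using
      this (neg_mem_Icc_iff.2 (by rwa [neg_neg])) (by rw [omega2_neg_right]; linarith)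
  wlog hs : 0 ≤ omega2 (1, 1) w generalizing w
  · simpa only [omega2_neg_right, abs_neg] using
      this (neg_mem_Icc_iff.2 (by rwa [neg_neg])) (by rw [omega2_neg_right]; linarith)
  rw [abs_of_nonneg ht, abs_of_nonneg hs]
  exact abs_omega2_le_of_omega2_nonneg hv hw ht hs

theorem stmt2 (v w : ℝ × ℝ) (hv : v ∈ hexP) (hw : w ∈ hexP) :
    |omega2 v w| ≤ |omega2 (1,1) v| + |omega2 (1,1) w| - |omega2 (1,1) v| * |omega2 (1,1) w| :=
  abs_omega2_le (hexP_subset_Icc hv) (hexP_subset_Icc hw)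
end

section
/- The hexagon P = conv{±(1,1), ±(1,0), ±(0,1)} ⊂ ℝ² is symplectically self-polar: P = P^ω, where P^ω = {y ∈ ℝ² : ∀ x ∈ P, ω(x,y) ≤ 1} and ω is the standard area form. -/
open Set

/-- Symplectic polar in ℝ². -/
def sPolar2 (X : Set (ℝ × ℝ)) : Set (ℝ × ℝ) := {y | ∀ x ∈ X, omega2 x y ≤ 1}

/-!
Since `ω(·, y)` is linear, the polar of a convex hull is the polar of its vertex set. For the six
vertices `v` of `P` the conditions `ω(v, y) ≤ 1` are exactly the six facet inequalities
`|y₁| ≤ 1, |y₂| ≤ 1, |y₁ - y₂| ≤ 1` of `P` itself. That `P` lies in this region follows from its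
convexity; conversely each point of the region lies in one of the six triangles spanned by `0`
and two adjacent vertices.
-/

theorem Convex.smul_add_smul_mem_of_zero_mem {𝕜 E : Type*} [Field 𝕜] [LinearOrder 𝕜]
    [IsStrictOrderedRing 𝕜] [AddCommGroup E] [Module 𝕜 E] {s : Set E} (hs : Convex 𝕜 s)
    (h0 : (0 : E) ∈ s) {u v : E} (hu : u ∈ s) (hv : v ∈ s) {a b : 𝕜} (ha : 0 ≤ a) (hb : 0 ≤ b)
    (hab : a + b ≤ 1) : a • u + b • v ∈ s := by
  have := hs.sum_mem (t := Finset.univ) (w := ![a, b, 1 - a - b]) (z := ![u, v, 0])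
    (by simp [Fin.forall_fin_succ, ha, hb]; linarith) (by simp [Fin.sum_univ_three])
    (by simp [Fin.forall_fin_succ, hu, hv, h0])
  simpa [Fin.sum_univ_three] using this

theorem isLinearMap_omega2_left (y : ℝ × ℝ) : IsLinearMap ℝ (omega2 · y) where
  map_add x x' := by simp only [omega2, Prod.fst_add, Prod.snd_add]; ring
  map_smul c x := by simp only [omega2, Prod.smul_fst, Prod.smul_snd, smul_eq_mul]; ring

theorem isLinearMap_omega2_right (x : ℝ × ℝ) : IsLinearMap ℝ (omega2 x) where
  map_add y y' := by simp only [omega2, Prod.fst_add, Prod.snd_add]; ring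
  map_smul c y := by simp only [omega2, Prod.smul_fst, Prod.smul_snd, smul_eq_mul]; ring

theorem convex_sPolar2 (X : Set (ℝ × ℝ)) : Convex ℝ (sPolar2 X) := by
  simp only [sPolar2, ofPred_forall]
  exact convex_iInter₂ fun x _ => convex_halfSpace_le (isLinearMap_omega2_right x) 1

theorem sPolar2_convexHull (X : Set (ℝ × ℝ)) : sPolar2 (convexHull ℝ X) = sPolar2 X := by
  refine Subset.antisymm (fun y hy x hx => hy x (subset_convexHull ℝ X hx)) fun y hy => ?_
  exact convexHull_min hy (convex_halfSpace_le (isLinearMap_omega2_left y) 1)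

def hexVertices : Set (ℝ × ℝ) := {(1,1), (1,0), (0,1), (-1,-1), (-1,0), (0,-1)}

theorem hexP_eq_convexHull : hexP = convexHull ℝ hexVertices := rfl

def hexRegion : Set (ℝ × ℝ) := {p | |p.1| ≤ 1 ∧ |p.2| ≤ 1 ∧ |p.1 - p.2| ≤ 1}

theorem sPolar2_hexVertices : sPolar2 hexVertices = hexRegion := by
  ext ⟨a, b⟩
  simp only [sPolar2, hexVertices, hexRegion, mem_insert_iff, mem_singleton_iff,
    forall_eq_or_imp, forall_eq, mem_ofPred_eq, omega2, abs_le]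
  constructor
  · rintro ⟨h1, h2, h3, h4, h5, h6⟩
    refine ⟨⟨?_, ?_⟩, ⟨?_, ?_⟩, ?_, ?_⟩ <;> linarith
  · rintro ⟨⟨h1, h2⟩, ⟨h3, h4⟩, h5, h6⟩
    refine ⟨?_, ?_, ?_, ?_, ?_, ?_⟩ <;> linarith

theorem hexRegion_subset_convexHull : hexRegion ⊆ convexHull ℝ hexVertices := by
  rintro ⟨a, b⟩ ⟨ha, hb, hab⟩
  rw [abs_le] at ha hb hab
  have hconv := convex_convexHull ℝ hexVertices
  have vertex : ∀ v ∈ hexVertices, v ∈ convexHull ℝ hexVertices := subset_convexHull ℝ _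
  have zero_mem : (0 : ℝ × ℝ) ∈ convexHull ℝ hexVertices := by
    have := hconv (vertex (1, 1) (by simp [hexVertices])) (vertex (-1, -1) (by simp [hexVertices]))
      (by norm_num : (0 : ℝ) ≤ 1 / 2) (by norm_num : (0 : ℝ) ≤ 1 / 2) (by norm_num)
    convert this using 1
    ext <;> norm_num
  have triangle : ∀ u ∈ hexVertices, ∀ v ∈ hexVertices, ∀ s t : ℝ, 0 ≤ s → 0 ≤ t → s + t ≤ 1 →
      s • u + t • v = (a, b) → (a, b) ∈ convexHull ℝ hexVertices := by
    intro u hu v hv s t hs ht hst h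
    exact h ▸ hconv.smul_add_smul_mem_of_zero_mem zero_mem (vertex u hu) (vertex v hv) hs ht hst
  rcases le_total 0 a with ha0 | ha0 <;> rcases le_total 0 b with hb0 | hb0
  · rcases le_total b a with h | h
    · exact triangle (1, 1) (by simp [hexVertices]) (1, 0) (by simp [hexVertices]) b (a - b)
        hb0 (by linarith) (by linarith) (by ext <;> simp)
    · exact triangle (1, 1) (by simp [hexVertices]) (0, 1) (by simp [hexVertices]) a (b - a)
        ha0 (by linarith) (by linarith) (by ext <;> simp)
  · exact triangle (1, 0) (by simp [hexVertices]) (0, -1) (by simp [hexVertices]) a (-b)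
      ha0 (by linarith) (by linarith) (by ext <;> simp)
  · exact triangle (-1, 0) (by simp [hexVertices]) (0, 1) (by simp [hexVertices]) (-a) b
      (by linarith) hb0 (by linarith) (by ext <;> simp)
  · rcases le_total b a with h | h
    · exact triangle (-1, -1) (by simp [hexVertices]) (0, -1) (by simp [hexVertices]) (-a) (a - b)
        (by linarith) (by linarith) (by linarith) (by ext <;> simp)
    · exact triangle (-1, -1) (by simp [hexVertices]) (-1, 0) (by simp [hexVertices]) (-b) (b - a)
        (by linarith) (by linarith) (by linarith) (by ext <;> simp)

theorem hexVertices_subset_hexRegion : hexVertices ⊆ hexRegion := by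
  rintro v (rfl | rfl | rfl | rfl | rfl | rfl) <;> norm_num [hexRegion]

theorem stmt3 : hexP = sPolar2 hexP := by
  rw [hexP_eq_convexHull, sPolar2_convexHull, sPolar2_hexVertices]
  have hconvex : Convex ℝ hexRegion := sPolar2_hexVertices ▸ convex_sPolar2 hexVertices
  exact (convexHull_min hexVertices_subset_hexRegion hconvex).antisymm hexRegion_subset_convexHull
end

section
/- Let X ⊂ ℝ^{2n} be a symplectically self-polar convex body (X = X^ω). Then the symplectic P-suspension P ⋉_ω X = {(v,x) ∈ P × ℝ^{2n} : |ω₂(u,v)| + ‖x‖_X ≤ 1} is a symplectically self-polar convex body in ℝ^{2n+2}, where P is the hexagon conv{±(1,1),±(1,0),±(0,1)} ⊂ ℝ², u = (1,1), and ω₂ is the standard area form on ℝ². -/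
/-!
Since `X = X^ω` and `0 ∈ int X`, the gauge of `X` is dual to `ω`: `ω(x, y) ≤ ‖x‖_X ‖y‖_X`, and
`‖y‖_X ≤ c` as soon as `ω(·, y) ≤ c` on `X`. For `p = (v, x)` and `q = (w, y)` in the suspension
this gives `ω(p, q) ≤ ω₂(v, w) + (1 - |ω₂(u, v)|)(1 - |ω₂(u, w)|) ≤ 1`, the last step being an
elementary inequality on the hexagon `P = {|v₁| ≤ 1, |v₂| ≤ 1, |v₁ - v₂| ≤ 1}`. Conversely, if `q`
lies in the polar of the suspension, testing it against `(v, 0)` for `v ∈ P` puts `w` in `P`,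
which is its own `ω₂`-polar, and testing it against `(±u, x)` for `x ∈ X` bounds `‖y‖_X` by
`1 - |ω₂(u, w)|`.
-/

open Set

/-- The standard symplectic form on ℝ^{2n} = (Fin n → ℝ) × (Fin n → ℝ). -/
noncomputable def symForm (n : ℕ) (x y : (Fin n → ℝ) × (Fin n → ℝ)) : ℝ :=
  ∑ i, (x.1 i * y.2 i - x.2 i * y.1 i)

/-- The symplectic polar of a set in ℝ^{2n}. -/
def sPolar (n : ℕ) (X : Set ((Fin n → ℝ) × (Fin n → ℝ))) : Set ((Fin n → ℝ) × (Fin n → ℝ)) :=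
  {y | ∀ x ∈ X, symForm n x y ≤ 1}

/-- ℝ^{2n+2} = ℝ² × ℝ^{2n}. -/
abbrev Amb (n : ℕ) := (ℝ × ℝ) × ((Fin n → ℝ) × (Fin n → ℝ))

/-- The direct-sum symplectic form on ℝ² × ℝ^{2n}. -/
noncomputable def symFormS (n : ℕ) (p q : Amb n) : ℝ :=
  omega2 p.1 q.1 + symForm n p.2 q.2

/-- The symplectic polar of a set in ℝ² × ℝ^{2n}. -/
def sPolarS (n : ℕ) (S : Set (Amb n)) : Set (Amb n) :=
  {q | ∀ p ∈ S, symFormS n p q ≤ 1}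

/-- The symplectic P-suspension of a centrally symmetric convex body X ⊂ ℝ^{2n}. -/
noncomputable def susp (n : ℕ) (X : Set ((Fin n → ℝ) × (Fin n → ℝ))) : Set (Amb n) :=
  {p | p.1 ∈ hexP ∧ |omega2 (1,1) p.1| + gauge X p.2 ≤ 1}


open Topology

section SymplecticPolar

variable {n : ℕ}

lemma symForm_add_right (x y z : (Fin n → ℝ) × (Fin n → ℝ)) :
    symForm n x (y + z) = symForm n x y + symForm n x z := by
  simp only [symForm, ← Finset.sum_add_distrib, Prod.fst_add, Prod.snd_add, Pi.add_apply]
  exact Finset.sum_congr rfl fun i _ => by ring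

lemma symForm_smul_left (c : ℝ) (x y : (Fin n → ℝ) × (Fin n → ℝ)) :
    symForm n (c • x) y = c * symForm n x y := by
  simp only [symForm, Finset.mul_sum, Prod.smul_fst, Prod.smul_snd, Pi.smul_apply, smul_eq_mul]
  exact Finset.sum_congr rfl fun i _ => by ring

lemma symForm_smul_right (c : ℝ) (x y : (Fin n → ℝ) × (Fin n → ℝ)) :
    symForm n x (c • y) = c * symForm n x y := by
  simp only [symForm, Finset.mul_sum, Prod.smul_fst, Prod.smul_snd, Pi.smul_apply, smul_eq_mul]
  exact Finset.sum_congr rfl fun i _ => by ring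

lemma symForm_comm (x y : (Fin n → ℝ) × (Fin n → ℝ)) :
    symForm n y x = -symForm n x y := by
  simp only [symForm, ← Finset.sum_neg_distrib]
  exact Finset.sum_congr rfl fun i _ => by ring

lemma symForm_neg_left (x y : (Fin n → ℝ) × (Fin n → ℝ)) :
    symForm n (-x) y = -symForm n x y := by
  simpa using symForm_smul_left (-1) x y

lemma convex_sPolar (X : Set ((Fin n → ℝ) × (Fin n → ℝ))) : Convex ℝ (sPolar n X) := by
  simp only [sPolar, ofPred_forall]
  exact convex_iInter₂ fun x _ =>
    convex_halfSpace_le ⟨symForm_add_right x, fun c y => symForm_smul_right c x y⟩ 1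

lemma isBounded_sPolar {X : Set ((Fin n → ℝ) × (Fin n → ℝ))} (hX : X ∈ 𝓝 0) :
    Bornology.IsBounded (sPolar n X) := by
  obtain ⟨r, hr, hball⟩ := Metric.mem_nhds_iff.1 hX
  have abs_symForm_le : ∀ x, ‖x‖ < r → ∀ y ∈ sPolar n X, |symForm n x y| ≤ 1 := by
    intro x hx y hy
    have hneg := hy (-x) (hball (by simpa using hx))
    rw [symForm_neg_left] at hneg
    exact abs_le.2 ⟨by linarith, hy x (hball (by simpa using hx))⟩
  have hsingle : ∀ i : Fin n, ‖(Pi.single i (r / 2) : Fin n → ℝ)‖ < r := fun i => by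
    rw [Pi.norm_single, Real.norm_of_nonneg (by positivity)]
    linarith
  refine (Metric.isBounded_iff_subset_closedBall 0).2 ⟨2 / r, fun y hy => ?_⟩
  have h2r : 0 ≤ 2 / r := by positivity
  rw [mem_closedBall_zero_iff, norm_prod_le_iff, pi_norm_le_iff_of_nonneg h2r,
    pi_norm_le_iff_of_nonneg h2r]
  constructor <;> intro i <;> rw [Real.norm_eq_abs, le_div_iff₀ hr]
  · have hsymForm : |symForm n (0, Pi.single i (r / 2)) y| = r / 2 * |y.1 i| := by
      simp [symForm, Pi.single_apply, abs_mul, abs_of_pos (half_pos hr)]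
    linarith [abs_symForm_le (0, Pi.single i (r / 2)) (by simpa using hsingle i) y hy]
  · have hsymForm : |symForm n (Pi.single i (r / 2), 0) y| = r / 2 * |y.2 i| := by
      simp [symForm, Pi.single_apply, abs_mul, abs_of_pos (half_pos hr)]
    linarith [abs_symForm_le (Pi.single i (r / 2), 0) (by simpa using hsingle i) y hy]

variable {X : Set ((Fin n → ℝ) × (Fin n → ℝ))}

lemma neg_mem_of_eq_sPolar (hX : X = sPolar n X) {y : (Fin n → ℝ) × (Fin n → ℝ)} (hy : y ∈ X) :
    -y ∈ X := by
  rw [hX]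
  intro x hx
  rw [symForm_comm, symForm_neg_left, neg_neg]
  exact (hX ▸ hx : x ∈ sPolar n X) y hy

lemma symForm_le_gauge_mul_gauge (hX : X ⊆ sPolar n X) (habs : Absorbent ℝ X)
    (x y : (Fin n → ℝ) × (Fin n → ℝ)) : symForm n x y ≤ gauge X x * gauge X y := by
  refine le_mul_of_forall_lt₀ fun s hs t ht => ?_
  obtain ⟨b, hb, hbs, x', hx', rfl⟩ := exists_lt_of_gauge_lt habs hs
  obtain ⟨c, hc, hct, y', hy', rfl⟩ := exists_lt_of_gauge_lt habs ht
  calc symForm n (b • x') (c • y') = b * c * symForm n x' y' := by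
        rw [symForm_smul_left, symForm_smul_right, mul_assoc]
    _ ≤ b * c * 1 := by gcongr; exact hX hy' x' hx'
    _ ≤ s * t := by nlinarith

lemma gauge_le_of_forall_symForm_le (hX : sPolar n X ⊆ X) {y : (Fin n → ℝ) × (Fin n → ℝ)}
    {c : ℝ} (hc : 0 ≤ c) (h : ∀ x ∈ X, symForm n x y ≤ c) : gauge X y ≤ c := by
  refine le_of_forall_gt_imp_ge_of_dense fun d hd => gauge_le_of_mem (hc.trans hd.le) ?_
  have hd0 : 0 < d := hc.trans_lt hd
  refine ⟨d⁻¹ • y, hX fun x hx => ?_, smul_inv_smul₀ hd0.ne' y⟩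
  calc symForm n x (d⁻¹ • y) = d⁻¹ * symForm n x y := symForm_smul_right _ x y
    _ ≤ d⁻¹ * d := by gcongr; exact (h x hx).trans hd.le
    _ = 1 := inv_mul_cancel₀ hd0.ne'

end SymplecticPolar

lemma smul_add_smul_mem_of_zero_mem {E : Type*} [AddCommGroup E] [Module ℝ E] {S : Set E}
    (hS : Convex ℝ S) (h0 : (0 : E) ∈ S) {x y : E} (hx : x ∈ S) (hy : y ∈ S) {a b : ℝ}
    (ha : 0 ≤ a) (hb : 0 ≤ b) (hab : a + b ≤ 1) : a • x + b • y ∈ S := by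
  have := hS.sum_mem (t := Finset.univ) (w := ![a, b, 1 - a - b]) (z := ![x, y, 0])
    (fun i _ => by fin_cases i <;> simp [ha, hb]; linarith)
    (by simp [Fin.sum_univ_three])
    (fun i _ => by fin_cases i <;> simp [hx, hy, h0])
  simpa [Fin.sum_univ_three] using this

section Hexagon

lemma omega2_smul_add_smul_right (u v w : ℝ × ℝ) (a b : ℝ) :
    omega2 u (a • v + b • w) = a * omega2 u v + b * omega2 u w := by
  simp only [omega2, Prod.fst_add, Prod.snd_add, Prod.smul_fst, Prod.smul_snd, smul_eq_mul]
  ring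

lemma omega2_one_one (v : ℝ × ℝ) : omega2 (1, 1) v = v.2 - v.1 := by
  simp [omega2]

lemma zero_mem_hexP : (0 : ℝ × ℝ) ∈ hexP := by
  have h : (1 / 2 : ℝ) • ((1 : ℝ), (1 : ℝ)) + (1 / 2 : ℝ) • ((-1 : ℝ), (-1 : ℝ)) ∈ hexP :=
    convex_convexHull ℝ _ (subset_convexHull ℝ _ (by simp)) (subset_convexHull ℝ _ (by simp))
      (by norm_num) (by norm_num) (by norm_num)
  convert h
  ext <;> norm_num

lemma mem_hexP_of_smul_add_smul {p q : ℝ × ℝ} (hp : p ∈ hexP) (hq : q ∈ hexP) {s t : ℝ}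
    (hs : 0 ≤ s) (ht : 0 ≤ t) (hst : s + t ≤ 1) {v : ℝ × ℝ} (hv : s • p + t • q = v) :
    v ∈ hexP :=
  hv ▸ smul_add_smul_mem_of_zero_mem (convex_convexHull ℝ _) zero_mem_hexP hp hq hs ht hst

lemma mem_hexP_iff {v : ℝ × ℝ} : v ∈ hexP ↔ |v.1| ≤ 1 ∧ |v.2| ≤ 1 ∧ |v.1 - v.2| ≤ 1 := by
  constructor
  · refine fun hv => convexHull_min (t := {w : ℝ × ℝ | |w.1| ≤ 1 ∧ |w.2| ≤ 1 ∧ |w.1 - w.2| ≤ 1})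
      ?_ ?_ hv
    · rintro w (rfl | rfl | rfl | rfl | rfl | rfl) <;> norm_num
    · rintro w ⟨hw₁, hw₂, hw₃⟩ w' ⟨hw₁', hw₂', hw₃'⟩ a b ha hb hab
      have hball : ∀ {x y : ℝ}, |x| ≤ 1 → |y| ≤ 1 → |a * x + b * y| ≤ 1 := fun hx hy => by
        simpa using (convex_closedBall (0 : ℝ) 1) (by simpa using hx) (by simpa using hy) ha hb hab
      refine ⟨hball hw₁ hw₁', hball hw₂ hw₂', ?_⟩
      simpa [mul_sub, add_sub_add_comm] using hball hw₃ hw₃'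
  · obtain ⟨a, b⟩ := v
    rintro ⟨h₁, h₂, h₃⟩
    rw [abs_le] at h₁ h₂ h₃
    have vertex : ∀ {w : ℝ × ℝ},
        w ∈ ({(1,1), (1,0), (0,1), (-1,-1), (-1,0), (0,-1)} : Set (ℝ × ℝ)) → w ∈ hexP :=
      fun hw => subset_convexHull ℝ _ hw
    -- `P` is the union of the six triangles spanned by `0` and two adjacent vertices.
    rcases le_total 0 a with ha | ha <;> rcases le_total 0 b with hb | hb
    · rcases le_total a b with hab | hab
      · exact mem_hexP_of_smul_add_smul (p := (0, 1)) (q := (1, 1)) (s := b - a) (t := a)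
          (vertex (by simp)) (vertex (by simp)) (by linarith) ha (by linarith) (by ext <;> simp)
      · exact mem_hexP_of_smul_add_smul (p := (1, 0)) (q := (1, 1)) (s := a - b) (t := b)
          (vertex (by simp)) (vertex (by simp)) (by linarith) hb (by linarith) (by ext <;> simp)
    · exact mem_hexP_of_smul_add_smul (p := (1, 0)) (q := (0, -1)) (s := a) (t := -b)
        (vertex (by simp)) (vertex (by simp)) ha (by linarith) (by linarith) (by ext <;> simp)
    · exact mem_hexP_of_smul_add_smul (p := (-1, 0)) (q := (0, 1)) (s := -a) (t := b)
        (vertex (by simp)) (vertex (by simp)) (by linarith) hb (by linarith) (by ext <;> simp)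
    · rcases le_total a b with hab | hab
      · exact mem_hexP_of_smul_add_smul (p := (-1, 0)) (q := (-1, -1)) (s := b - a) (t := -b)
          (vertex (by simp)) (vertex (by simp)) (by linarith) (by linarith) (by linarith)
          (by ext <;> simp)
      · exact mem_hexP_of_smul_add_smul (p := (0, -1)) (q := (-1, -1)) (s := a - b) (t := -a)
          (vertex (by simp)) (vertex (by simp)) (by linarith) (by linarith) (by linarith)
          (by ext <;> simp)

lemma abs_omega2_one_one_le {v : ℝ × ℝ} (hv : v ∈ hexP) : |omega2 (1, 1) v| ≤ 1 := by
  rw [omega2_one_one, abs_sub_comm]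
  exact (mem_hexP_iff.1 hv).2.2

lemma neg_mem_hexP {v : ℝ × ℝ} (hv : v ∈ hexP) : -v ∈ hexP := by
  obtain ⟨h₁, h₂, h₃⟩ := mem_hexP_iff.1 hv
  refine mem_hexP_iff.2 ⟨by simpa using h₁, by simpa using h₂, ?_⟩
  rwa [Prod.fst_neg, Prod.snd_neg, neg_sub_neg, abs_sub_comm]

lemma mem_hexP_of_forall_omega2_le {w : ℝ × ℝ} (h : ∀ v ∈ hexP, omega2 v w ≤ 1) : w ∈ hexP := by
  have hvertex := fun v hv => h v (subset_convexHull ℝ _ hv)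
  simp only [mem_insert_iff, mem_singleton_iff, forall_eq_or_imp, forall_eq, omega2] at hvertex
  obtain ⟨h₁, h₂, h₃, h₄, h₅, h₆⟩ := hvertex
  refine mem_hexP_iff.2 ⟨abs_le.2 ⟨?_, ?_⟩, abs_le.2 ⟨?_, ?_⟩, abs_le.2 ⟨?_, ?_⟩⟩ <;> linarith

lemma omega2_add_mul_le_one {v w : ℝ × ℝ} (hv : v ∈ hexP) (hw : w ∈ hexP) :
    omega2 v w + (1 - |omega2 (1, 1) v|) * (1 - |omega2 (1, 1) w|) ≤ 1 := by
  obtain ⟨hv₁, hv₂, -⟩ := mem_hexP_iff.1 hv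
  obtain ⟨hw₁, hw₂, -⟩ := mem_hexP_iff.1 hw
  obtain ⟨hv₁, hv₁'⟩ := abs_le.1 hv₁
  obtain ⟨hv₂, hv₂'⟩ := abs_le.1 hv₂
  obtain ⟨hw₁, hw₁'⟩ := abs_le.1 hw₁
  obtain ⟨hw₂, hw₂'⟩ := abs_le.1 hw₂
  rw [omega2_one_one, omega2_one_one, omega2]
  rcases abs_cases (v.2 - v.1) with ⟨hd, hd'⟩ | ⟨hd, hd'⟩ <;>
    rcases abs_cases (w.2 - w.1) with ⟨he, he'⟩ | ⟨he, he'⟩ <;> rw [hd, he] <;> nlinarith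

end Hexagon

section Suspension

variable {n : ℕ} {X : Set ((Fin n → ℝ) × (Fin n → ℝ))}

lemma convex_susp (hconv : Convex ℝ X) (habs : Absorbent ℝ X) : Convex ℝ (susp n X) := by
  rintro p ⟨hp, hpX⟩ q ⟨hq, hqX⟩ a b ha hb hab
  refine ⟨convex_convexHull ℝ _ hp hq ha hb hab, ?_⟩
  have hω : |omega2 (1, 1) (a • p + b • q).1|
      ≤ a * |omega2 (1, 1) p.1| + b * |omega2 (1, 1) q.1| := by
    rw [Prod.fst_add, Prod.smul_fst, Prod.smul_fst, omega2_smul_add_smul_right]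
    exact (abs_add_le _ _).trans_eq (by rw [abs_mul, abs_mul, abs_of_nonneg ha, abs_of_nonneg hb])
  have hg : gauge X (a • p + b • q).2 ≤ a * gauge X p.2 + b * gauge X q.2 := by
    calc gauge X (a • p.2 + b • q.2) ≤ gauge X (a • p.2) + gauge X (b • q.2) :=
          gauge_add_le hconv habs _ _
      _ = a * gauge X p.2 + b * gauge X q.2 := by
          rw [gauge_smul_of_nonneg ha, gauge_smul_of_nonneg hb, smul_eq_mul, smul_eq_mul]
  calc |omega2 (1, 1) (a • p + b • q).1| + gauge X (a • p + b • q).2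
      ≤ a * (|omega2 (1, 1) p.1| + gauge X p.2) + b * (|omega2 (1, 1) q.1| + gauge X q.2) := by
        linarith
    _ ≤ a * 1 + b * 1 := by gcongr
    _ = 1 := by rw [mul_one, mul_one, hab]

lemma isCompact_susp (hconv : Convex ℝ X) (hX : X ∈ 𝓝 0) (hbdd : Bornology.IsBounded X) :
    IsCompact (susp n X) := by
  have hP : IsCompact hexP := (toFinite _).isCompact_convexHull ℝ
  have hcont : Continuous fun p : Amb n => |omega2 (1, 1) p.1| + gauge X p.2 := by
    have : Continuous fun p : Amb n => omega2 (1, 1) p.1 := by unfold omega2; fun_prop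
    exact this.abs.add ((continuous_gauge hconv hX).comp continuous_snd)
  have hclosed : IsClosed (susp n X) :=
    (hP.isClosed.preimage continuous_fst).inter (isClosed_le hcont continuous_const)
  refine Metric.isCompact_of_isClosed_isBounded hclosed ((hP.isBounded.prod hbdd.closure).subset ?_)
  rintro p ⟨hp, hpX⟩
  exact ⟨hp, (gauge_le_one_iff_mem_closure hconv hX).1
    (by linarith [abs_nonneg (omega2 (1, 1) p.1)])⟩

lemma neg_mem_susp (hsym : ∀ x ∈ X, -x ∈ X) {p : Amb n} (hp : p ∈ susp n X) : -p ∈ susp n X := by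
  refine ⟨neg_mem_hexP hp.1, ?_⟩
  rw [Prod.fst_neg, Prod.snd_neg, gauge_neg hsym, omega2_one_one, Prod.fst_neg, Prod.snd_neg,
    neg_sub_neg, abs_sub_comm, ← omega2_one_one]
  exact hp.2

lemma susp_subset_sPolarS (hX : X ⊆ sPolar n X) (habs : Absorbent ℝ X) :
    susp n X ⊆ sPolarS n (susp n X) := by
  rintro q ⟨hq, hqX⟩ p ⟨hp, hpX⟩
  have hωp := abs_omega2_one_one_le hp
  calc symFormS n p q = omega2 p.1 q.1 + symForm n p.2 q.2 := rfl
    _ ≤ omega2 p.1 q.1 + gauge X p.2 * gauge X q.2 := by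
        gcongr
        exact symForm_le_gauge_mul_gauge hX habs _ _
    _ ≤ omega2 p.1 q.1 + (1 - |omega2 (1, 1) p.1|) * (1 - |omega2 (1, 1) q.1|) := by
        have := gauge_nonneg (s := X) q.2
        gcongr <;> linarith
    _ ≤ 1 := omega2_add_mul_le_one hp hq

lemma sPolarS_susp_subset (hX : sPolar n X ⊆ X) : sPolarS n (susp n X) ⊆ susp n X := by
  intro q hq
  have hq₁ : q.1 ∈ hexP := mem_hexP_of_forall_omega2_le fun v hv => by
    simpa [symFormS, symForm] using
      hq (v, 0) ⟨hv, by simpa [gauge_zero] using abs_omega2_one_one_le hv⟩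
  refine ⟨hq₁, ?_⟩
  suffices gauge X q.2 ≤ 1 - |omega2 (1, 1) q.1| by linarith
  refine gauge_le_of_forall_symForm_le hX (by linarith [abs_omega2_one_one_le hq₁])
    fun x hx => ?_
  have hgx := gauge_le_one_of_mem hx
  have hu := hq ((1, 1), x) ⟨subset_convexHull ℝ _ (by simp), by simpa [omega2] using hgx⟩
  have hnu := hq ((-1, -1), x) ⟨subset_convexHull ℝ _ (by simp), by simpa [omega2] using hgx⟩
  simp only [symFormS, omega2] at hu hnu
  rw [le_sub_comm, omega2_one_one]
  exact abs_le.2 ⟨by linarith, by linarith⟩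

end Suspension

theorem stmt4_general (n : ℕ) (X : Set ((Fin n → ℝ) × (Fin n → ℝ)))
    (h0 : (0 : (Fin n → ℝ) × (Fin n → ℝ)) ∈ interior X)
    (hself : X = sPolar n X) :
    Convex ℝ (susp n X) ∧ IsCompact (susp n X) ∧ (∀ p ∈ susp n X, -p ∈ susp n X) ∧
      susp n X = sPolarS n (susp n X) := by
  have hX : X ∈ 𝓝 0 := mem_interior_iff_mem_nhds.1 h0
  have habs : Absorbent ℝ X := absorbent_nhds_zero hX
  have hconv : Convex ℝ X := hself ▸ convex_sPolar X
  have hbdd : Bornology.IsBounded X := hself ▸ isBounded_sPolar hX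
  exact ⟨convex_susp hconv habs, isCompact_susp hconv hX hbdd,
    fun _ => neg_mem_susp fun _ => neg_mem_of_eq_sPolar hself,
    (susp_subset_sPolarS hself.le habs).antisymm (sPolarS_susp_subset hself.ge)⟩

theorem stmt4 (n : ℕ) (X : Set ((Fin n → ℝ) × (Fin n → ℝ)))
    (hconv : Convex ℝ X) (hcomp : IsCompact X) (hsym : ∀ x ∈ X, -x ∈ X)
    (h0 : (0 : (Fin n → ℝ) × (Fin n → ℝ)) ∈ interior X)
    (hself : X = sPolar n X) :
    Convex ℝ (susp n X) ∧ IsCompact (susp n X) ∧ (∀ p ∈ susp n X, -p ∈ susp n X) ∧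
      susp n X = sPolarS n (susp n X) :=
  stmt4_general n X h0 hself
end

section
/- For any positive integer n, there do not exist 2n+2 pairwise distinct points v₁, …, v_{2n+2} in ℝ^{2n} such that ω(v_i, v_j) = 1 for all 1 ≤ i < j ≤ 2n+2, where ω is the standard symplectic form on ℝ^{2n}. -/
/-!
With `w i = v i - v (2n+1)` for `i ≤ 2n`, the form `ω (v k) (w i)` vanishes for `k < i` and equals
`-1` for `k = i`. This triangularity makes `w 0, …, w (2n)` linearly independent: `2n + 1`
independent vectors in `ℝ^{2n}`.
-/

open Set

noncomputable def symFormₗ (n : ℕ) (x : (Fin n → ℝ) × (Fin n → ℝ)) :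
    ((Fin n → ℝ) × (Fin n → ℝ)) →ₗ[ℝ] ℝ where
  toFun := symForm n x
  map_add' a b := by
    simp only [symForm, Prod.fst_add, Prod.snd_add, Pi.add_apply, ← Finset.sum_add_distrib]
    exact Finset.sum_congr rfl fun i _ => by ring
  map_smul' c a := by
    simp only [symForm, Prod.smul_fst, Prod.smul_snd, Pi.smul_apply, smul_eq_mul,
      RingHom.id_apply, Finset.mul_sum]
    exact Finset.sum_congr rfl fun i _ => by ring

@[simp]
lemma symFormₗ_apply (n : ℕ) (x y : (Fin n → ℝ) × (Fin n → ℝ)) :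
    symFormₗ n x y = symForm n x y := rfl

@[simp]
lemma symForm_self (n : ℕ) (x : (Fin n → ℝ) × (Fin n → ℝ)) : symForm n x x = 0 := by
  simp [symForm, mul_comm]

lemma symForm_sub_right (n : ℕ) (x a b : (Fin n → ℝ) × (Fin n → ℝ)) :
    symForm n x (a - b) = symForm n x a - symForm n x b :=
  (symFormₗ n x).map_sub a b

/-- Apply `f i` to a vanishing combination, for `i` the least index with a nonzero coefficient. -/
theorem linearIndependent_of_triangular {K V ι : Type*} [Ring K] [NoZeroDivisors K]
    [AddCommGroup V] [Module K V] [Fintype ι] [LinearOrder ι]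
    (f : ι → V →ₗ[K] K) (w : ι → V)
    (h_lt : ∀ k i, k < i → f k (w i) = 0) (h_diag : ∀ i, f i (w i) ≠ 0) :
    LinearIndependent K w := by
  rw [Fintype.linearIndependent_iff]
  intro c hc
  by_contra! hne
  obtain ⟨i, hi, hmin⟩ := wellFounded_lt.has_min {j | c j ≠ 0} hne
  have hfi : ∑ j, c j * f i (w j) = 0 := by simpa using congrArg (f i) hc
  rw [Finset.sum_eq_single i] at hfi
  · exact mul_ne_zero hi (h_diag i) hfi
  · intro j _ hji
    rcases hji.lt_or_gt with hj | hj
    · have hcj : c j = 0 := by_contra fun h => hmin j h hj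
      simp [hcj]
    · simp [h_lt i j hj]
  · simp

theorem stmt11_general (n : ℕ) :
    ¬ ∃ v : Fin (2 * n + 2) → (Fin n → ℝ) × (Fin n → ℝ),
        Function.Injective v ∧ ∀ i j, i < j → symForm n (v i) (v j) = 1 := by
  rintro ⟨v, -, hv⟩
  have hlast : ∀ i : Fin (2 * n + 1), symForm n (v i.castSucc) (v (Fin.last _)) = 1 :=
    fun i => hv _ _ i.castSucc_lt_last
  have h_indep : LinearIndependent ℝ fun i : Fin (2 * n + 1) => v i.castSucc - v (Fin.last _) := by
    refine linearIndependent_of_triangular (fun k => symFormₗ n (v k.castSucc)) _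
      (fun k i hki => ?_) (fun i => ?_)
    · simp [symForm_sub_right, hv _ _ (Fin.castSucc_lt_castSucc_iff.mpr hki), hlast]
    · simp [symForm_sub_right, hlast]
  have hcard := h_indep.fintype_card_le_finrank
  rw [Fintype.card_fin, Module.finrank_prod, Module.finrank_fin_fun] at hcard
  omega

theorem stmt11 (n : ℕ) (hn : 1 ≤ n) :
    ¬ ∃ v : Fin (2 * n + 2) → (Fin n → ℝ) × (Fin n → ℝ),
        Function.Injective v ∧ ∀ i j, i < j → symForm n (v i) (v j) = 1 :=
  stmt11_general n
end

section
/- Define a_n = (2n/(2n+1))^n · Γ(n+3/4)/Γ(n+1/2) · Γ(1/2)/Γ(3/4) for positive integers n. Then a₁ = 1 and the sequence (a_n) is strictly increasing: a_{n+1}/a_n > 1 for all n ≥ 1. -/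
/-!
By `Γ(x+1) = xΓ(x)` the ratio `a (n+1) / a n` equals
`(2n+2)/(2n+3) · (1 + 1/(2n²+3n))^n · (n+3/4)/(n+1/2)`. Bernoulli's inequality bounds the middle
factor below by `(2n+4)/(2n+3)`, and the resulting rational function exceeds `1` because
`(2n+2)(2n+4)(4n+3) - (2n+3)²(4n+2) = 4n² + 8n + 6 > 0`.
-/

open Real

/-- `a n = (2n/(2n+1))^n · Γ(n+3/4)/Γ(n+1/2) · Γ(1/2)/Γ(3/4)`. -/
noncomputable def aSeq (n : ℕ) : ℝ :=
  ((2 * n : ℝ) / (2 * n + 1)) ^ n * (Gamma ((n : ℝ) + 3/4) / Gamma ((n : ℝ) + 1/2)) *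
    (Gamma (1/2) / Gamma (3/4))

lemma Gamma_add_one_add_div_Gamma_add_one_add {x a b : ℝ} (ha : x + a ≠ 0) (hb : x + b ≠ 0) :
    Gamma (x + 1 + a) / Gamma (x + 1 + b) =
      (x + a) / (x + b) * (Gamma (x + a) / Gamma (x + b)) := by
  rw [add_right_comm, Gamma_add_one ha, add_right_comm x 1 b, Gamma_add_one hb, mul_div_mul_comm]

lemma aSeq_one : aSeq 1 = 1 := by
  have hG := Gamma_add_one_add_div_Gamma_add_one_add (x := 0) (a := 3/4) (b := 1/2)
    (by norm_num) (by norm_num)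
  have h34 : 0 < Gamma (3/4) := Gamma_pos_of_pos (by norm_num)
  have h12 : 0 < Gamma (1/2) := Gamma_pos_of_pos (by norm_num)
  simp only [zero_add] at hG
  rw [aSeq, Nat.cast_one, hG]
  field_simp
  norm_num

lemma pow_succ_div_pow {K : Type*} [Field K] (a b : K) (n : ℕ) :
    a ^ (n + 1) / b ^ n = a * (a / b) ^ n := by
  rw [div_pow, pow_succ', mul_div_assoc]

lemma aSeq_succ_div {n : ℕ} (hn : 0 < n) :
    aSeq (n + 1) / aSeq n = (2 * n + 2) / (2 * n + 3) * (1 + 1 / (2 * (n : ℝ) ^ 2 + 3 * n)) ^ n *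
      ((n + 3/4) / (n + 1/2)) := by
  have hx : (0 : ℝ) < n := Nat.cast_pos.mpr hn
  have hG := Gamma_add_one_add_div_Gamma_add_one_add (x := (n : ℝ)) (a := 3/4) (b := 1/2)
    (by positivity) (by positivity)
  have hP : 0 < (2 * (n : ℝ) / (2 * n + 1)) ^ n := by positivity
  have hQ : 0 < Gamma ((n : ℝ) + 3/4) / Gamma (n + 1/2) :=
    div_pos (Gamma_pos_of_pos (by positivity)) (Gamma_pos_of_pos (by positivity))
  have hC : 0 < Gamma (1/2) / Gamma (3/4) :=
    div_pos (Gamma_pos_of_pos (by norm_num)) (Gamma_pos_of_pos (by norm_num))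
  have hbase : 1 + 1 / (2 * (n : ℝ) ^ 2 + 3 * n) =
      (2 * n + 2) / (2 * n + 3) / (2 * n / (2 * n + 1)) := by
    field_simp
    ring
  rw [hbase, ← pow_succ_div_pow, aSeq, aSeq, Nat.cast_succ, hG]
  field_simp
  ring

lemma one_lt_mul_mul_of_nonneg {x : ℝ} (hx : 0 ≤ x) :
    1 < (2 * x + 2) / (2 * x + 3) * ((2 * x + 4) / (2 * x + 3)) * ((x + 3/4) / (x + 1/2)) := by
  rw [div_mul_div_comm, div_mul_div_comm, one_lt_div (by positivity)]
  nlinarith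

lemma div_le_one_add_inv_pow {n : ℕ} (hn : 0 < n) :
    (2 * n + 4) / (2 * n + 3) ≤ (1 + 1 / (2 * (n : ℝ) ^ 2 + 3 * n)) ^ n := by
  have hx : (0 : ℝ) < n := Nat.cast_pos.mpr hn
  have ha : 0 ≤ 1 / (2 * (n : ℝ) ^ 2 + 3 * n) := by positivity
  calc (2 * n + 4) / (2 * n + 3) = 1 + n * (1 / (2 * (n : ℝ) ^ 2 + 3 * n)) := by
        field_simp
        ring
    _ ≤ _ := one_add_mul_le_pow (by linarith) n

theorem stmt15 : aSeq 1 = 1 ∧ ∀ n : ℕ, 1 ≤ n → aSeq (n + 1) / aSeq n > 1 := by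
  refine ⟨aSeq_one, fun n hn => ?_⟩
  rw [aSeq_succ_div hn]
  calc (1 : ℝ)
      < (2 * n + 2) / (2 * n + 3) * ((2 * n + 4) / (2 * n + 3)) * ((n + 3/4) / (n + 1/2)) :=
        one_lt_mul_mul_of_nonneg n.cast_nonneg
    _ ≤ _ := by gcongr; exact div_le_one_add_inv_pow hn
end
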